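/- Characterization of the fibers of Z: for all a, b ∈ ℝ³, Z(a) = Z(b) if and only if there exist n, m ∈ ℤ and p ∈ {0,1} such that a = R_{(1,1)}^p(b) + (4n, 4m, 0), where R_{(1,1)}^0 is the identity and R_{(1,1)}^1 = R_{(1,1)}. -/

import Mathlib

/-- Explicit vector in ℝ³ (with the Euclidean norm). -/
def vec3 (a b c : ℝ) : EuclideanSpace ℝ (Fin 3) := WithLp.toLp 2 ![a, b, c]

/-- The 4-periodic sawtooth: h(t) = t on [-1,1], h(t) = 2 - t on [1,3]. -/
noncomputable def h (t : ℝ) : ℝ := 1 - |4 * Int.fract ((t + 1) / 4) - 2|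

/-- The sign function ε(t) = (-1)^⌊(t+1)/2⌋. -/
noncomputable def eps (t : ℝ) : ℝ := (-1 : ℝ) ^ ⌊(t + 1) / 2⌋

/-- The Zorich-type map Z : ℝ³ → ℝ³. -/
noncomputable def Z (x : EuclideanSpace ℝ (Fin 3)) : EuclideanSpace ℝ (Fin 3) :=
  Real.exp (x 2) •
    vec3 (h (x 0)) (h (x 1)) (eps (x 0) * eps (x 1) * (1 - max |h (x 0)| |h (x 1)|))

/-- Rotation by π about the vertical line {(u,v,t) : t ∈ ℝ}. -/
noncomputable def Rot (u v : ℝ) (x : EuclideanSpace ℝ (Fin 3)) : EuclideanSpace ℝ (Fin 3) :=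
  vec3 (2 * u - x 0) (2 * v - x 1) (x 2)

/-!
`Z x` lies on the surface `max (|y₀|, |y₁|) + |y₂| = exp x₂`, so `Z a = Z b` forces `a₂ = b₂`, and
then equality of `h (x₀)`, `h (x₁)` and of the height `ε(x₀) ε(x₁) (1 - max (|h x₀|, |h x₁|))`.
The sawtooth `h` takes the value `h t` exactly on `t + 4ℤ` and `2 - t + 4ℤ`, so `(a₀, a₁)` is congruent
mod `4ℤ²` to `(b₀, b₁)`, to its reflection `(2 - b₀, 2 - b₁)`, or to a mixed reflection. Reflecting a
single coordinate preserves `h` and reverses the sign `ε`, which changes the height unless it vanishes;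
it vanishes only when a coordinate is an odd integer, and there `t ↦ 2 - t` is a translation mod 4,
so the mixed case collapses to one of the other two.
-/

open AddCommGroup

theorem Function.Periodic.eq_of_modEq {α β : Type*} [AddCommGroup α] {f : α → β} {c a b : α}
    (hf : Function.Periodic f c) (hab : a ≡ b [PMOD c]) : f a = f b := by
  obtain ⟨z, rfl⟩ := modEq_iff_eq_add_zsmul.mp hab
  exact (hf.zsmul z a).symm

theorem modEq_iff_exists_eq_add_mul {R : Type*} [CommRing R] {p a b : R} :
    a ≡ b [PMOD p] ↔ ∃ n : ℤ, b = a + p * n := by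
  simp only [modEq_iff_eq_add_zsmul, zsmul_eq_mul, mul_comm]

theorem two_sub_modEq_self {R : Type*} [CommRing R] {t : R} (ht : t ≡ 1 [PMOD 2]) :
    2 - t ≡ t [PMOD 4] := by
  obtain ⟨z, rfl⟩ := modEq_iff_eq_add_zsmul.mp ht.symm
  exact modEq_iff_eq_add_zsmul.mpr ⟨z, by simp only [zsmul_eq_mul]; ring⟩

theorem h_periodic : Function.Periodic h 4 := by
  intro t
  simp only [h, show (t + 4 + 1) / 4 = (t + 1) / 4 + 1 by ring, Int.fract_add_one]

theorem h_two_sub (t : ℝ) : h (2 - t) = h t := by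
  have key : Int.fract ((2 - t + 1) / 4) = 1 - Int.fract ((t + 1) / 4) ∨
      Int.fract ((t + 1) / 4) = 0 ∧ Int.fract ((2 - t + 1) / 4) = 0 := by
    rw [show (2 - t + 1) / 4 = -((t + 1) / 4) + 1 by ring, Int.fract_add_one]
    by_cases hz : Int.fract ((t + 1) / 4) = 0
    · exact .inr ⟨hz, Int.fract_neg_eq_zero.mpr hz⟩
    · exact .inl (Int.fract_neg hz)
  unfold h
  rcases key with hf | ⟨h1, h2⟩
  · rw [hf, ← abs_neg]; ring_nf
  · rw [h1, h2]

theorem abs_h_le_one (t : ℝ) : |h t| ≤ 1 := by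
  have := Int.fract_nonneg ((t + 1) / 4)
  have := Int.fract_lt_one ((t + 1) / 4)
  unfold h
  rw [abs_le]
  constructor <;> cases abs_cases (4 * Int.fract ((t + 1) / 4) - 2) <;> linarith

theorem modEq_or_modEq_two_sub_of_h_eq {s t : ℝ} (hst : h s = h t) :
    s ≡ t [PMOD 4] ∨ s ≡ 2 - t [PMOD 4] := by
  obtain ⟨u, hu⟩ : ∃ u, u = (s + 1) / 4 := ⟨_, rfl⟩
  obtain ⟨v, hv⟩ : ∃ v, v = (t + 1) / 4 := ⟨_, rfl⟩
  have := Int.fract_nonneg u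
  have := Int.fract_lt_one u
  have := Int.fract_nonneg v
  have := Int.fract_lt_one v
  have hfu : Int.fract u = u - ⌊u⌋ := rfl
  have hfv : Int.fract v = v - ⌊v⌋ := rfl
  simp only [modEq_iff_eq_add_zsmul, zsmul_eq_mul]
  rcases abs_eq_abs.mp (by unfold h at hst; rw [← hu, ← hv] at hst; linarith :
    |4 * Int.fract u - 2| = |4 * Int.fract v - 2|) with he | he
  · exact .inl ⟨⌊v⌋ - ⌊u⌋, by push_cast; linarith⟩
  · exact .inr ⟨-(⌊u⌋ + ⌊v⌋), by push_cast; linarith⟩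

theorem abs_h_eq_one_iff {t : ℝ} : |h t| = 1 ↔ t ≡ 1 [PMOD 2] := by
  rw [modEq_comm, modEq_iff_eq_add_zsmul]
  simp only [zsmul_eq_mul]
  constructor
  · intro ht
    obtain ⟨u, hu⟩ : ∃ u, u = (t + 1) / 4 := ⟨_, rfl⟩
    have := Int.fract_nonneg u
    have := Int.fract_lt_one u
    have hfu : Int.fract u = u - ⌊u⌋ := rfl
    unfold h at ht
    rw [← hu] at ht
    rcases abs_eq_abs.mp (ht.trans abs_one.symm) with h1 | h1
    · have h0 := abs_eq_zero.mp (by linarith : |4 * Int.fract u - 2| = 0)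
      exact ⟨2 * ⌊u⌋, by push_cast; linarith⟩
    · rcases (abs_eq zero_le_two).mp (by linarith : |4 * Int.fract u - 2| = 2) with h2 | h2
      · linarith
      · exact ⟨2 * ⌊u⌋ - 1, by push_cast; linarith⟩
  · rintro ⟨z, rfl⟩
    rcases Int.even_or_odd' z with ⟨k, rfl | rfl⟩
    · rw [h, show (1 + ((2 * k : ℤ) : ℝ) * 2 + 1) / 4 = (k : ℤ) + 1 / 2 by push_cast; ring,
        add_comm, Int.fract_add_intCast, Int.fract_eq_self.mpr (by norm_num)]
      norm_num
    · rw [h, show (1 + ((2 * k + 1 : ℤ) : ℝ) * 2 + 1) / 4 = ((k + 1 : ℤ) : ℝ) by push_cast; ring,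
        Int.fract_intCast]
      norm_num

theorem abs_eps (t : ℝ) : |eps t| = 1 := by
  simp [eps]

theorem eps_periodic : Function.Periodic eps 4 := by
  intro t
  rw [eps, eps, show (t + 4 + 1) / 2 = (t + 1) / 2 + (2 : ℤ) by push_cast; ring,
    Int.floor_add_intCast, zpow_add₀ (by norm_num), zpow_two, neg_one_mul, neg_neg, mul_one]

theorem eps_two_sub {t : ℝ} (ht : ¬ t ≡ 1 [PMOD 2]) : eps (2 - t) = -eps t := by
  set x := (t + 1) / 2 with hx
  have hx_ne : ∀ n : ℤ, x ≠ n := by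
    rintro n hn
    refine ht (modEq_comm.mp (modEq_iff_eq_add_zsmul.mpr ⟨n - 1, ?_⟩))
    rw [zsmul_eq_mul]; push_cast; linarith
  have hfloor : ⌊(2 - t + 1) / 2⌋ = 1 - ⌊x⌋ := by
    have := Int.lt_floor_add_one x
    have := lt_of_le_of_ne (Int.floor_le x) (hx_ne ⌊x⌋).symm
    rw [Int.floor_eq_iff]
    push_cast
    constructor <;> linarith
  rw [eps, eps, hfloor, ← hx, sub_eq_add_neg, zpow_add₀ (by norm_num), zpow_neg, zpow_one]
  rcases Int.even_or_odd ⌊x⌋ with he | ho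
  · rw [he.neg_one_zpow]; norm_num
  · rw [ho.neg_one_zpow]; norm_num

noncomputable def zorichHeight (s t : ℝ) : ℝ := eps s * eps t * (1 - max |h s| |h t|)

theorem zorichHeight_comm (s t : ℝ) : zorichHeight s t = zorichHeight t s := by
  rw [zorichHeight, zorichHeight, mul_comm (eps s), max_comm]

theorem abs_zorichHeight (s t : ℝ) : |zorichHeight s t| = 1 - max |h s| |h t| := by
  rw [zorichHeight, abs_mul, abs_mul, abs_eps, abs_eps, one_mul, one_mul, abs_of_nonneg]
  exact sub_nonneg.mpr (max_le (abs_h_le_one s) (abs_h_le_one t))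

theorem zorichHeight_eq_zero_iff {s t : ℝ} :
    zorichHeight s t = 0 ↔ s ≡ 1 [PMOD 2] ∨ t ≡ 1 [PMOD 2] := by
  rw [← abs_eq_zero, abs_zorichHeight, sub_eq_zero, ← abs_h_eq_one_iff, ← abs_h_eq_one_iff]
  rw [eq_comm, max_eq_iff]
  constructor
  · rintro (⟨h1, -⟩ | ⟨h1, -⟩)
    exacts [.inl h1, .inr h1]
  · rintro (h1 | h1)
    · exact .inl ⟨h1, h1 ▸ abs_h_le_one t⟩
    · exact .inr ⟨h1, h1 ▸ abs_h_le_one s⟩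

theorem zorichHeight_congr {s s' t t' : ℝ} (hs : s ≡ s' [PMOD 4]) (ht : t ≡ t' [PMOD 4]) :
    zorichHeight s t = zorichHeight s' t' := by
  rw [zorichHeight, zorichHeight, h_periodic.eq_of_modEq hs, h_periodic.eq_of_modEq ht,
    eps_periodic.eq_of_modEq hs, eps_periodic.eq_of_modEq ht]

theorem zorichHeight_two_sub_right (s : ℝ) {t : ℝ} (ht : ¬ t ≡ 1 [PMOD 2]) :
    zorichHeight s (2 - t) = -zorichHeight s t := by
  rw [zorichHeight, zorichHeight, h_two_sub, eps_two_sub ht]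
  ring

theorem zorichHeight_two_sub (s t : ℝ) : zorichHeight (2 - s) (2 - t) = zorichHeight s t := by
  by_cases hst : s ≡ 1 [PMOD 2] ∨ t ≡ 1 [PMOD 2]
  · have h0 := zorichHeight_eq_zero_iff.mpr hst
    rw [h0, ← abs_eq_zero, abs_zorichHeight, h_two_sub, h_two_sub, ← abs_zorichHeight, h0,
      abs_zero]
  · rw [not_or] at hst
    rw [zorichHeight_two_sub_right _ hst.2, zorichHeight_comm, zorichHeight_two_sub_right _ hst.1,
      zorichHeight_comm, neg_neg]

theorem modEq_or_of_modEq_two_sub_of_zorichHeight_eq {s s' t t' : ℝ} (hs : s ≡ s' [PMOD 4])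
    (ht : t ≡ 2 - t' [PMOD 4]) (hz : zorichHeight s t = zorichHeight s' t') :
    s ≡ s' [PMOD 4] ∧ t ≡ t' [PMOD 4] ∨ s ≡ 2 - s' [PMOD 4] ∧ t ≡ 2 - t' [PMOD 4] := by
  by_cases ht' : t' ≡ 1 [PMOD 2]
  · exact .inl ⟨hs, ht.trans (two_sub_modEq_self ht')⟩
  by_cases hs' : s' ≡ 1 [PMOD 2]
  · exact .inr ⟨hs.trans (two_sub_modEq_self hs').symm, ht⟩
  have hz' : zorichHeight s' t' = 0 := by
    rw [zorichHeight_congr hs ht, zorichHeight_two_sub_right _ ht'] at hz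
    linarith
  exact absurd (zorichHeight_eq_zero_iff.mp hz') (by tauto)

theorem h_eq_and_zorichHeight_eq_iff {s s' t t' : ℝ} :
    h s = h s' ∧ h t = h t' ∧ zorichHeight s t = zorichHeight s' t' ↔
      s ≡ s' [PMOD 4] ∧ t ≡ t' [PMOD 4] ∨ s ≡ 2 - s' [PMOD 4] ∧ t ≡ 2 - t' [PMOD 4] := by
  constructor
  · rintro ⟨hs, ht, hz⟩
    rcases modEq_or_modEq_two_sub_of_h_eq hs with hs | hs <;>
      rcases modEq_or_modEq_two_sub_of_h_eq ht with ht | ht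
    · exact .inl ⟨hs, ht⟩
    · exact modEq_or_of_modEq_two_sub_of_zorichHeight_eq hs ht hz
    · rw [zorichHeight_comm, zorichHeight_comm s'] at hz
      rcases modEq_or_of_modEq_two_sub_of_zorichHeight_eq ht hs hz with ⟨ht, hs⟩ | ⟨ht, hs⟩
      exacts [.inl ⟨hs, ht⟩, .inr ⟨hs, ht⟩]
    · exact .inr ⟨hs, ht⟩
  · rintro (⟨hs, ht⟩ | ⟨hs, ht⟩)
    · exact ⟨h_periodic.eq_of_modEq hs, h_periodic.eq_of_modEq ht, zorichHeight_congr hs ht⟩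
    · exact ⟨(h_periodic.eq_of_modEq hs).trans (h_two_sub s'),
        (h_periodic.eq_of_modEq ht).trans (h_two_sub t'),
        (zorichHeight_congr hs ht).trans (zorichHeight_two_sub s' t')⟩

theorem vec3_apply_zero (u v w : ℝ) : vec3 u v w 0 = u := rfl
theorem vec3_apply_one (u v w : ℝ) : vec3 u v w 1 = v := rfl
theorem vec3_apply_two (u v w : ℝ) : vec3 u v w 2 = w := rfl

theorem vec3_inj {u v w u' v' w' : ℝ} :
    vec3 u v w = vec3 u' v' w' ↔ u = u' ∧ v = v' ∧ w = w' := by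
  refine ⟨fun huvw => ⟨congrArg (· 0) huvw, congrArg (· 1) huvw, congrArg (· 2) huvw⟩, ?_⟩
  rintro ⟨rfl, rfl, rfl⟩
  rfl

theorem eq_add_vec3_iff {x y : EuclideanSpace ℝ (Fin 3)} {u v w : ℝ} :
    x = y + vec3 u v w ↔ x 0 = y 0 + u ∧ x 1 = y 1 + v ∧ x 2 = y 2 + w := by
  refine ⟨by rintro rfl; exact ⟨rfl, rfl, rfl⟩, fun ⟨h0, h1, h2⟩ => ?_⟩
  ext i
  fin_cases i
  exacts [h0, h1, h2]

theorem Z_eq_smul_vec3 (x : EuclideanSpace ℝ (Fin 3)) :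
    Z x = Real.exp (x 2) • vec3 (h (x 0)) (h (x 1)) (zorichHeight (x 0) (x 1)) :=
  rfl

theorem max_abs_add_abs_Z (x : EuclideanSpace ℝ (Fin 3)) :
    max |Z x 0| |Z x 1| + |Z x 2| = Real.exp (x 2) := by
  have hZ0 : Z x 0 = Real.exp (x 2) * h (x 0) := rfl
  have hZ1 : Z x 1 = Real.exp (x 2) * h (x 1) := rfl
  have hZ2 : Z x 2 = Real.exp (x 2) * zorichHeight (x 0) (x 1) := rfl
  simp only [hZ0, hZ1, hZ2, abs_mul, Real.abs_exp, abs_zorichHeight,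
    ← mul_max_of_nonneg _ _ (Real.exp_pos _).le]
  ring

theorem Z_eq_Z_iff {a b : EuclideanSpace ℝ (Fin 3)} :
    Z a = Z b ↔ a 2 = b 2 ∧ h (a 0) = h (b 0) ∧ h (a 1) = h (b 1) ∧
      zorichHeight (a 0) (a 1) = zorichHeight (b 0) (b 1) := by
  constructor
  · intro hZ
    have h2 : a 2 = b 2 :=
      Real.exp_injective (by rw [← max_abs_add_abs_Z, hZ, max_abs_add_abs_Z])
    rw [Z_eq_smul_vec3, Z_eq_smul_vec3, h2, (smul_right_injective _ (Real.exp_ne_zero _)).eq_iff,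
      vec3_inj] at hZ
    exact ⟨h2, hZ⟩
  · rintro ⟨h2, h0, h1, hz⟩
    rw [Z_eq_smul_vec3, Z_eq_smul_vec3, h2, h0, h1, hz]

/-- Characterization of the fibers of Z: Z(a) = Z(b) iff a is obtained from b by
    applying R_{(1,1)} at most once (p ∈ {0,1}) and translating by (4n, 4m, 0). -/
theorem zorich_fibers (a b : EuclideanSpace ℝ (Fin 3)) :
    Z a = Z b ↔
      ∃ n m : ℤ, a = b + vec3 (4 * n) (4 * m) 0 ∨ a = Rot 1 1 b + vec3 (4 * n) (4 * m) 0 := by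
  simp only [Z_eq_Z_iff, h_eq_and_zorichHeight_eq_iff, modEq_comm (a := a _),
    modEq_iff_exists_eq_add_mul, eq_add_vec3_iff, Rot, vec3_apply_zero, vec3_apply_one,
    vec3_apply_two, mul_one, add_zero]
  constructor
  · rintro ⟨h2, ⟨⟨n, h0⟩, ⟨m, h1⟩⟩ | ⟨⟨n, h0⟩, ⟨m, h1⟩⟩⟩
    exacts [⟨n, m, .inl ⟨h0, h1, h2⟩⟩, ⟨n, m, .inr ⟨h0, h1, h2⟩⟩]
  · rintro ⟨n, m, ⟨h0, h1, h2⟩ | ⟨h0, h1, h2⟩⟩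
    exacts [⟨h2, .inl ⟨⟨n, h0⟩, ⟨m, h1⟩⟩⟩, ⟨h2, .inr ⟨⟨n, h0⟩, ⟨m, h1⟩⟩⟩]
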